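/- arXiv:math/0210376 — 2 statements merged into one kernel-verified Lean document; each statement's English description precedes it below -/
import Mathlib

section
/- If e is an element of a finite matroid M that is neither a loop nor a coloop, then the h-polynomials of the independence complexes satisfy the deletion–contraction relation h_{Δ(M)}(t) = h_{Δ(M−e)}(t) + h_{Δ(M/e)}(t). -/
open Finset Polynomial

def fVec {V : Type*} (Δ : Finset (Finset V)) (i : ℕ) : ℤ :=
  ((Δ.filter (fun F => F.card = i)).card : ℤ)

def hVec {V : Type*} (Δ : Finset (Finset V)) (s i : ℕ) : ℤ :=
  ∑ k ∈ Finset.range (i + 1), (-1 : ℤ) ^ (i + k) * fVec Δ k * ((s - k).choose (i - k))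

noncomputable def hPoly {V : Type*} (Δ : Finset (Finset V)) (s : ℕ) : Polynomial ℤ :=
  ∑ i ∈ Finset.range (s + 1), C (hVec Δ s i) * X ^ (s - i)

open scoped Classical in
/-- The independence complex of a matroid: its faces are the independent sets. -/
noncomputable def indepComplex {α : Type*} [Fintype α] (M : Matroid α) :
    Finset (Finset α) :=
  Finset.univ.powerset.filter (fun F => M.Indep (F : Set α))

/-!
Faces of `Δ(M)` avoiding `e` are exactly the faces of `Δ(M − e)`, and `F ↦ F \ {e}` is a
bijection from the faces containing `e` onto the faces of `Δ(M/e)`, lowering the size by one.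
Hence `f_{k+1}(M) = f_{k+1}(M − e) + f_k(M/e)`, and since `h_i` is a signed binomial combination
of `f_0, …, f_i` whose binomials `C(s - k, i - k)` are invariant under shifting `s, i, k` together,
the `h`-polynomial of rank `s + 1` splits into those of ranks `s + 1` and `s`.
-/

lemma hVec_zero {V : Type*} (Δ : Finset (Finset V)) (s : ℕ) : hVec Δ s 0 = fVec Δ 0 := by
  simp [hVec]

section HVector

variable {V W U : Type*} {Δ : Finset (Finset V)} {Δd : Finset (Finset W)}
  {Δc : Finset (Finset U)}

lemma hVec_succ_succ_eq_add (hf0 : fVec Δ 0 = fVec Δd 0)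
    (hf : ∀ k, fVec Δ (k + 1) = fVec Δd (k + 1) + fVec Δc k) (s j : ℕ) :
    hVec Δ (s + 1) (j + 1) = hVec Δd (s + 1) (j + 1) + hVec Δc s j := by
  have hshift : ∀ m, (-1 : ℤ) ^ (j + 1 + (m + 1)) * fVec Δc m * ((s + 1 - (m + 1)).choose
      (j + 1 - (m + 1))) = (-1 : ℤ) ^ (j + m) * fVec Δc m * ((s - m).choose (j - m)) := by
    intro m
    rw [show j + 1 + (m + 1) = j + m + 2 by ring, pow_add, neg_one_sq, mul_one,
      Nat.add_sub_add_right, Nat.add_sub_add_right]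
  unfold hVec
  rw [Finset.sum_range_succ' _ (j + 1), Finset.sum_range_succ' _ (j + 1), hf0]
  simp only [add_zero]
  rw [add_right_comm, ← Finset.sum_add_distrib]
  congr 1
  refine Finset.sum_congr rfl fun m _ => ?_
  rw [hf, ← hshift]
  ring

lemma hPoly_succ_eq_add (hf0 : fVec Δ 0 = fVec Δd 0)
    (hf : ∀ k, fVec Δ (k + 1) = fVec Δd (k + 1) + fVec Δc k) (s : ℕ) :
    hPoly Δ (s + 1) = hPoly Δd (s + 1) + hPoly Δc s := by
  have hterm : ∀ i, C (hVec Δ (s + 1) (i + 1)) * X ^ (s + 1 - (i + 1)) =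
      C (hVec Δd (s + 1) (i + 1)) * X ^ (s + 1 - (i + 1)) + C (hVec Δc s i) * X ^ (s - i) := by
    intro i
    rw [hVec_succ_succ_eq_add hf0 hf, C_add, add_mul, Nat.add_sub_add_right]
  simp only [hPoly, Finset.sum_range_succ' _ (s + 1), hterm, Finset.sum_add_distrib,
    hVec_zero, hf0]
  ring

end HVector

section FaceFamily

variable {V : Type*} [DecidableEq V]

def faceDeletion (Δ : Finset (Finset V)) (e : V) : Finset (Finset V) :=
  Δ.filter (e ∉ ·)

def faceLink (Δ : Finset (Finset V)) (e : V) : Finset (Finset V) :=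
  (Δ.filter (e ∈ ·)).image (·.erase e)

lemma fVec_faceDeletion_zero (Δ : Finset (Finset V)) (e : V) :
    fVec (faceDeletion Δ e) 0 = fVec Δ 0 := by
  simp only [fVec, faceDeletion, Finset.filter_filter]
  congr 3
  ext F
  constructor
  · exact fun h => h.2
  · intro h
    exact ⟨by simp [Finset.card_eq_zero.mp h], h⟩

lemma card_filter_card_faceLink (Δ : Finset (Finset V)) (e : V) (k : ℕ) :
    ((faceLink Δ e).filter (·.card = k)).card =
      ((Δ.filter (e ∈ ·)).filter (·.card = k + 1)).card := by
  symm
  refine Finset.card_bij' (fun F _ => F.erase e) (fun G _ => insert e G) ?_ ?_ ?_ ?_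
  · intro F hF
    simp only [Finset.mem_filter] at hF
    simp only [faceLink, Finset.mem_filter, Finset.mem_image]
    exact ⟨⟨F, hF.1, rfl⟩, by rw [Finset.card_erase_of_mem hF.1.2, hF.2, Nat.add_sub_cancel]⟩
  · intro G hG
    simp only [faceLink, Finset.mem_image, Finset.mem_filter] at hG
    obtain ⟨⟨F, ⟨hFΔ, heF⟩, rfl⟩, hcard⟩ := hG
    simp only [Finset.mem_filter, Finset.insert_erase heF]
    exact ⟨⟨hFΔ, heF⟩, by rw [← hcard, Finset.card_erase_add_one heF]⟩
  · intro F hF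
    simp only [Finset.mem_filter] at hF
    exact Finset.insert_erase hF.1.2
  · intro G hG
    simp only [faceLink, Finset.mem_image, Finset.mem_filter] at hG
    obtain ⟨⟨F, -, rfl⟩, -⟩ := hG
    exact Finset.erase_insert (Finset.notMem_erase e F)

lemma fVec_succ_eq_faceDeletion_add_faceLink (Δ : Finset (Finset V)) (e : V) (k : ℕ) :
    fVec Δ (k + 1) = fVec (faceDeletion Δ e) (k + 1) + fVec (faceLink Δ e) k := by
  have hsplit := Finset.card_filter_add_card_filter_not (s := Δ.filter (·.card = k + 1)) (e ∉ ·)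
  simp only [not_not, Finset.filter_comm (fun F : Finset V => F.card = k + 1)] at hsplit
  simp only [fVec, faceDeletion, card_filter_card_faceLink]
  exact_mod_cast hsplit.symm

theorem hPoly_eq_faceDeletion_add_faceLink (Δ : Finset (Finset V)) (e : V) (s : ℕ) :
    hPoly Δ (s + 1) = hPoly (faceDeletion Δ e) (s + 1) + hPoly (faceLink Δ e) s :=
  hPoly_succ_eq_add (fVec_faceDeletion_zero Δ e).symm
    (fVec_succ_eq_faceDeletion_add_faceLink Δ e) s

end FaceFamily

section IndepComplex

variable {α : Type*} [Fintype α]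

lemma mem_indepComplex (M : Matroid α) (F : Finset α) :
    F ∈ indepComplex M ↔ M.Indep (F : Set α) := by
  classical
  simp [indepComplex]

variable [DecidableEq α]

lemma indepComplex_restrict_diff_singleton (M : Matroid α) (e : α) :
    indepComplex (M.restrict (M.E \ {e})) = faceDeletion (indepComplex M) e := by
  ext F
  simp only [faceDeletion, Finset.mem_filter, mem_indepComplex, Matroid.restrict_indep_iff]
  constructor
  · rintro ⟨hF, hsub⟩
    exact ⟨hF, fun he => (hsub he).2 rfl⟩
  · rintro ⟨hF, heF⟩
    exact ⟨hF, fun x hx => ⟨hF.subset_ground hx, by rintro rfl; exact heF hx⟩⟩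

lemma indepComplex_eq_faceLink {M M' : Matroid α} {e : α}
    (hM'I : ∀ I : Set α, M'.Indep I ↔ e ∉ I ∧ M.Indep (insert e I)) :
    indepComplex M' = faceLink (indepComplex M) e := by
  ext J
  simp only [faceLink, Finset.mem_image, Finset.mem_filter, mem_indepComplex, hM'I]
  constructor
  · rintro ⟨heJ, hJ⟩
    exact ⟨insert e J, ⟨by rwa [Finset.coe_insert], Finset.mem_insert_self e J⟩,
      Finset.erase_insert (by exact_mod_cast heJ)⟩
  · rintro ⟨F, ⟨hF, heF⟩, rfl⟩
    refine ⟨by simp, ?_⟩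
    rwa [← Finset.coe_insert, Finset.insert_erase heF]

end IndepComplex

theorem hPoly_deletion_contraction_general {α : Type*} [Fintype α] (M : Matroid α) (e : α) (r : ℕ)
    (hnotloop : M.Indep {e})
    (hrank : ∀ B, M.IsBase B → B.ncard = r)
    (M' : Matroid α)
    (hM'I : ∀ I : Set α, M'.Indep I ↔ e ∉ I ∧ M.Indep (insert e I)) :
    hPoly (indepComplex M) r =
      hPoly (indepComplex (M.restrict (M.E \ {e}))) r + hPoly (indepComplex M') (r - 1) := by
  classical
  obtain ⟨B, hB, heB⟩ := hnotloop.exists_isBase_superset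
  obtain ⟨s, rfl⟩ : ∃ s, r = s + 1 := by
    refine Nat.exists_eq_add_one.mpr ?_
    rw [← hrank B hB]
    exact (Set.ncard_pos B.toFinite).mpr ⟨e, heB rfl⟩
  rw [Nat.add_sub_cancel, indepComplex_restrict_diff_singleton, indepComplex_eq_faceLink hM'I]
  exact hPoly_eq_faceDeletion_add_faceLink _ e s

/-- Deletion–contraction for `h`-polynomials of independence complexes: if `e` is neither a
loop nor a coloop of the rank-`r` matroid `M`, then
`h_{Δ(M)}(t) = h_{Δ(M−e)}(t) + h_{Δ(M/e)}(t)`.  Here the deletion `M − e` is the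
restriction of `M` to `M.E \ {e}`, and the contraction `M/e` is characterized by its
ground set `M.E \ {e}` and independent sets `I` with `e ∉ I` and `insert e I` independent
in `M`. -/
theorem hPoly_deletion_contraction {α : Type*} [Fintype α] (M : Matroid α) (e : α) (r : ℕ)
    (he : e ∈ M.E)
    (hnotloop : M.Indep {e})
    (hnotcoloop : ∃ B, M.IsBase B ∧ e ∉ B)
    (hrank : ∀ B, M.IsBase B → B.ncard = r)
    (M' : Matroid α)
    (hM'E : M'.E = M.E \ {e})
    (hM'I : ∀ I : Set α, M'.Indep I ↔ e ∉ I ∧ M.Indep (insert e I)) :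
    hPoly (indepComplex M) r =
      hPoly (indepComplex (M.restrict (M.E \ {e}))) r + hPoly (indepComplex M') (r - 1) :=
  hPoly_deletion_contraction_general M e r hnotloop hrank M' hM'I
end

section
/- The Macaulay operator is monotone: if j ≤ j' are positive integers, then j^{<i>} ≤ j'^{<i>}, where j^{<i>} is obtained from the i-th Macaulay representation j = Σ_{m=l}^{i} C(a_m, m) by j^{<i>} = Σ_{m=l}^{i} C(a_m + 1, m + 1). -/
/-- `IsMacaulayRep i j l a` says `j = C(a_i,i) + ... + C(a_l,l)` with
`a_i > ... > a_l ≥ l ≥ 1`. -/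
def IsMacaulayRep (i j l : ℕ) (a : ℕ → ℕ) : Prop :=
  1 ≤ l ∧ l ≤ i ∧ l ≤ a l ∧ (∀ m, l ≤ m → m < i → a m < a (m + 1)) ∧
    j = ∑ m ∈ Finset.Icc l i, (a m).choose m

private lemma macaulay_sum_lt (l : ℕ) (a : ℕ → ℕ) (hl : 1 ≤ l) (hal : l ≤ a l)
    (i : ℕ) (hli : l ≤ i) (hmono : ∀ m, l ≤ m → m < i → a m < a (m + 1)) :
    ∑ m ∈ Finset.Icc l i, (a m).choose m < (a i + 1).choose i := by
  induction i, hli using Nat.le_induction with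
  | base =>
    rw [Finset.Icc_self, Finset.sum_singleton]
    obtain ⟨k, rfl⟩ : ∃ k, l = k + 1 := ⟨l - 1, by omega⟩
    have h4 : (a (k + 1) + 1).choose (k + 1)
        = (a (k + 1)).choose k + (a (k + 1)).choose (k + 1) := Nat.choose_succ_succ _ _
    have : 0 < (a (k + 1)).choose k := Nat.choose_pos (by omega)
    omega
  | succ n hn ih =>
    rw [Finset.sum_Icc_succ_top (by omega)]
    have h1 : ∑ m ∈ Finset.Icc l n, (a m).choose m < (a n + 1).choose n :=
      ih (fun m hm hm' => hmono m hm (by omega))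
    have h2 : a n + 1 ≤ a (n + 1) := hmono n hn (by omega)
    have h3 : (a n + 1).choose n ≤ (a (n + 1)).choose n := Nat.choose_le_choose n h2
    have h4 : (a (n + 1) + 1).choose (n + 1)
        = (a (n + 1)).choose n + (a (n + 1)).choose (n + 1) := Nat.choose_succ_succ _ _
    omega

private lemma macaulay_shift_lt (l : ℕ) (a : ℕ → ℕ) (hl : 1 ≤ l) (hal : l ≤ a l)
    (i : ℕ) (hli : l ≤ i) (hmono : ∀ m, l ≤ m → m < i → a m < a (m + 1)) :
    ∑ m ∈ Finset.Icc l i, (a m + 1).choose (m + 1) < (a i + 2).choose (i + 1) := by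
  induction i, hli using Nat.le_induction with
  | base =>
    rw [Finset.Icc_self, Finset.sum_singleton]
    have h4 : (a l + 2).choose (l + 1) = (a l + 1).choose l + (a l + 1).choose (l + 1) :=
      Nat.choose_succ_succ _ _
    have : 0 < (a l + 1).choose l := Nat.choose_pos (by omega)
    omega
  | succ n hn ih =>
    rw [Finset.sum_Icc_succ_top (by omega)]
    have h1 : ∑ m ∈ Finset.Icc l n, (a m + 1).choose (m + 1) < (a n + 2).choose (n + 1) :=
      ih (fun m hm hm' => hmono m hm (by omega))
    have h2 : a n + 1 ≤ a (n + 1) := hmono n hn (by omega)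
    have h3 : (a n + 2).choose (n + 1) ≤ (a (n + 1) + 1).choose (n + 1) :=
      Nat.choose_le_choose _ (by omega)
    have h4 : (a (n + 1) + 2).choose (n + 1 + 1)
        = (a (n + 1) + 1).choose (n + 1) + (a (n + 1) + 1).choose (n + 1 + 1) :=
      Nat.choose_succ_succ _ _
    omega

private lemma macaulay_aux :
    ∀ i j j' l l' : ℕ, ∀ a a' : ℕ → ℕ, 1 ≤ j → j ≤ j' →
    IsMacaulayRep i j l a → IsMacaulayRep i j' l' a' →
    ∑ m ∈ Finset.Icc l i, (a m + 1).choose (m + 1) ≤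
      ∑ m ∈ Finset.Icc l' i, (a' m + 1).choose (m + 1) := by
  intro i
  induction i with
  | zero =>
    intro j j' l l' a a' hj hjj' hrep hrep'
    obtain ⟨hl, hli, _⟩ := hrep
    omega
  | succ n ih =>
    intro j j' l l' a a' hj hjj' hrep hrep'
    obtain ⟨hl, hli, hal, hmono, hsum⟩ := hrep
    obtain ⟨hl', hli', hal', hmono', hsum'⟩ := hrep'
    have hlead : (a (n + 1)).choose (n + 1) ≤ j := by
      rw [hsum]
      exact Finset.single_le_sum (f := fun m => (a m).choose m)
        (fun m _ => Nat.zero_le _) (Finset.mem_Icc.mpr ⟨hli, le_rfl⟩)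
    have hbound' : j' < (a' (n + 1) + 1).choose (n + 1) := by
      rw [hsum']
      exact macaulay_sum_lt l' a' hl' hal' (n + 1) hli' hmono'
    have hle : a (n + 1) ≤ a' (n + 1) := by
      by_contra h
      push_neg at h
      have : (a' (n + 1) + 1).choose (n + 1) ≤ (a (n + 1)).choose (n + 1) :=
        Nat.choose_le_choose (n + 1) (by omega)
      omega
    rcases lt_or_eq_of_le hle with hlt | heq
    · -- a (n+1) < a' (n+1)
      have h1 : ∑ m ∈ Finset.Icc l (n + 1), (a m + 1).choose (m + 1)
          < (a (n + 1) + 2).choose (n + 2) :=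
        macaulay_shift_lt l a hl hal (n + 1) hli hmono
      have h2 : (a (n + 1) + 2).choose (n + 2) ≤ (a' (n + 1) + 1).choose (n + 2) :=
        Nat.choose_le_choose _ (by omega)
      have h3 : (a' (n + 1) + 1).choose (n + 2) ≤
          ∑ m ∈ Finset.Icc l' (n + 1), (a' m + 1).choose (m + 1) :=
        Finset.single_le_sum (f := fun m => (a' m + 1).choose (m + 1))
          (fun m _ => Nat.zero_le _) (Finset.mem_Icc.mpr ⟨hli', le_rfl⟩)
      omega
    · -- a (n+1) = a' (n+1)
      rcases eq_or_lt_of_le hli with hlei | hlti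
      · -- l = n + 1 : LHS is a single term
        rw [← hlei, Finset.Icc_self, Finset.sum_singleton, hlei, heq]
        exact Finset.single_le_sum (f := fun m => (a' m + 1).choose (m + 1))
          (fun m _ => Nat.zero_le _) (Finset.mem_Icc.mpr ⟨hli', le_rfl⟩)
      · -- l < n + 1
        have hln : l ≤ n := by omega
        have hsum_split :
            j = (∑ m ∈ Finset.Icc l n, (a m).choose m) + (a (n + 1)).choose (n + 1) := by
          rw [hsum, Finset.sum_Icc_succ_top (by omega)]
        have hpos : 1 ≤ (a l).choose l := Nat.choose_pos hal
        have hjsub : 1 ≤ ∑ m ∈ Finset.Icc l n, (a m).choose m :=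
          le_trans hpos
            (Finset.single_le_sum (f := fun m => (a m).choose m)
              (fun m _ => Nat.zero_le _) (Finset.mem_Icc.mpr ⟨le_rfl, hln⟩))
        rcases eq_or_lt_of_le hli' with hlei' | hlti'
        · -- l' = n + 1 : contradiction
          exfalso
          have hj'eq : j' = (a' (n + 1)).choose (n + 1) := by
            rw [hsum', ← hlei', Finset.Icc_self, Finset.sum_singleton, hlei']
          rw [hj'eq, ← heq] at hjj'
          omega
        · -- l' ≤ n : induct
          have hln' : l' ≤ n := by omega
          have hsum_split' :
              j' = (∑ m ∈ Finset.Icc l' n, (a' m).choose m) + (a' (n + 1)).choose (n + 1) := by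
            rw [hsum', Finset.sum_Icc_succ_top (by omega)]
          have hrepn : IsMacaulayRep n (∑ m ∈ Finset.Icc l n, (a m).choose m) l a :=
            ⟨hl, hln, hal, fun m hm hm' => hmono m hm (by omega), rfl⟩
          have hrepn' : IsMacaulayRep n (∑ m ∈ Finset.Icc l' n, (a' m).choose m) l' a' :=
            ⟨hl', hln', hal', fun m hm hm' => hmono' m hm (by omega), rfl⟩
          have hle' : (∑ m ∈ Finset.Icc l n, (a m).choose m)
              ≤ ∑ m ∈ Finset.Icc l' n, (a' m).choose m := by
            rw [heq] at hsum_split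
            omega
          have hIH := ih _ _ l l' a a' hjsub hle' hrepn hrepn'
          rw [Finset.sum_Icc_succ_top (show l ≤ n + 1 by omega),
            Finset.sum_Icc_succ_top (show l' ≤ n + 1 by omega)]
          have : (a (n + 1) + 1).choose (n + 1 + 1) = (a' (n + 1) + 1).choose (n + 1 + 1) := by
            rw [heq]
          omega

/-- Monotonicity of the Macaulay operator `j ↦ j^{<i>}`: if `j ≤ j'`, then
`j^{<i>} ≤ j'^{<i>}`, where `j^{<i>} = Σ_m C(a_m + 1, m + 1)` is computed from the `i`-th
Macaulay representation `j = Σ_m C(a_m, m)`. -/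
theorem macaulay_op_monotone (i j j' l l' : ℕ) (a a' : ℕ → ℕ)
    (hi : 1 ≤ i) (hj : 1 ≤ j) (hjj' : j ≤ j')
    (hrep : IsMacaulayRep i j l a) (hrep' : IsMacaulayRep i j' l' a') :
    ∑ m ∈ Finset.Icc l i, (a m + 1).choose (m + 1) ≤
      ∑ m ∈ Finset.Icc l' i, (a' m + 1).choose (m + 1) :=
  macaulay_aux i j j' l l' a a' hj hjj' hrep hrep'
end
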